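/- Suppose Y is a T₀ space, and let ι : Y → O(Z∞ × Y), y ↦ O((0, y)), and ĵ : O(Y) → O(Z∞ × Y), O_Y(y) ↦ O((∞, y)), where O(Y) is the quasi-orbit space of Y for the action n·y = σⁿ(y). Then every open subset S of O(Z∞ × Y) can be written as S = ι(U) ∪ ĵ(W) where U is an open subset of Y, W is an open subset of O(Y), and U is nonempty whenever W is nonempty. -/

import Mathlib

/-!
Every quasi-orbit of `Z∞ × Y` is either `ι y` (all points `(n, y)` with `n ∈ ℤ` lie in one orbit)
or `ĵ O_Y(y)`, so `S = ι(ι⁻¹ S) ∪ ĵ(ĵ⁻¹ S)`; both preimages are open because `ι` and `ĵ` are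
induced by continuous maps `Y → Z∞ × Y`. Since `(n, y) → (∞, y)` as `n → ∞`, the point `ι y`
lies in every open set containing `ĵ O_Y(y)`, which gives `U ≠ ∅` whenever `W ≠ ∅`.
-/

open Filter Topology

/-- The order topology on `Z∞ = ℤ ∪ {∞}` (formally `WithTop ℤ`): every `n ∈ ℤ` is isolated,
and the sets `J_n = {k : ℤ | n ≤ k} ∪ {∞}` form a neighborhood basis at `∞`. -/
noncomputable instance : TopologicalSpace (WithTop ℤ) := Preorder.topology (WithTop ℤ)

instance : OrderTopology (WithTop ℤ) := ⟨rfl⟩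

/-- The integer power `σⁿ` (`n : ℤ`) of a homeomorphism `σ : Y ≃ₜ Y`, as a function. -/
def sigmaPow {Y : Type*} [TopologicalSpace Y] (σ : Y ≃ₜ Y) (n : ℤ) : Y → Y :=
  fun y => (σ.toEquiv ^ n) y

/-- The action of `ℤ` on `Z∞ × Y`: `n·(m, y) = (m + n, y)` for `m ∈ ℤ`, and
`n·(∞, y) = (∞, σⁿ(y))`. -/
def actZ {Y : Type*} [TopologicalSpace Y] (σ : Y ≃ₜ Y) (n : ℤ) (p : WithTop ℤ × Y) :
    WithTop ℤ × Y :=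
  (p.1.map (· + n), if p.1 = ⊤ then sigmaPow σ n p.2 else p.2)

/-- The quasi-orbit equivalence relation for an action `act` of `ℤ` on a topological space
`X`: `x ≈ y` iff the closures of the `ℤ`-orbits of `x` and `y` coincide. -/
def qSetoid {X : Type*} [TopologicalSpace X] (act : ℤ → X → X) : Setoid X :=
  ⟨fun x y =>
      closure (Set.range fun n : ℤ => act n x) = closure (Set.range fun n : ℤ => act n y),
    ⟨fun _ => rfl, Eq.symm, Eq.trans⟩⟩

/-- The map `ι : Y → O(Z∞ × Y)` sending `y` to the quasi-orbit of `((0 : Z∞), y)`. -/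
noncomputable def iotaO {Y : Type*} [TopologicalSpace Y] (σ : Y ≃ₜ Y) :
    Y → Quotient (qSetoid (actZ σ)) :=
  fun y => Quotient.mk (qSetoid (actZ σ)) (((0 : ℤ) : WithTop ℤ), y)

section QuasiOrbit

variable {Y : Type*} [TopologicalSpace Y] (σ : Y ≃ₜ Y)

lemma actZ_coe (n m : ℤ) (y : Y) :
    actZ σ n ((m : WithTop ℤ), y) = (((m + n : ℤ) : WithTop ℤ), y) := by
  simp [actZ]

lemma range_actZ_coe (m : ℤ) (y : Y) :
    (Set.range fun n : ℤ => actZ σ n ((m : WithTop ℤ), y)) =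
      Set.range fun n : ℤ => ((n : WithTop ℤ), y) := by
  ext p
  simp only [Set.mem_range, actZ_coe]
  constructor
  · rintro ⟨n, rfl⟩
    exact ⟨m + n, rfl⟩
  · rintro ⟨n, rfl⟩
    exact ⟨n - m, by simp⟩

lemma mk_coe_eq_iotaO (m : ℤ) (y : Y) :
    Quotient.mk (qSetoid (actZ σ)) ((m : WithTop ℤ), y) = iotaO σ y :=
  Quotient.sound <| show closure _ = closure _ by rw [range_actZ_coe, range_actZ_coe]

lemma continuous_mk_prodMk (m : WithTop ℤ) :
    Continuous fun y : Y => Quotient.mk (qSetoid (actZ σ)) (m, y) :=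
  continuous_quot_mk.comp (Continuous.prodMk_right m)

lemma continuous_iotaO : Continuous (iotaO σ) :=
  continuous_mk_prodMk σ _

lemma iotaO_specializes_mk_top (y : Y) :
    iotaO σ y ⤳ Quotient.mk (qSetoid (actZ σ)) ((⊤ : WithTop ℤ), y) := by
  rw [specializes_iff_forall_open]
  intro s hs hys
  have hf : Continuous fun m : WithTop ℤ => Quotient.mk (qSetoid (actZ σ)) (m, y) :=
    continuous_quot_mk.comp (Continuous.prodMk_left y)
  obtain ⟨n, hn⟩ := (WithTop.tendsto_coe_atTop.eventually
    ((hs.preimage hf).mem_nhds hys)).exists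
  rw [← mk_coe_eq_iotaO σ n y]
  exact hn

lemma range_iotaO_union (j : Quotient (qSetoid (fun (n : ℤ) (y : Y) => sigmaPow σ n y)) →
      Quotient (qSetoid (actZ σ)))
    (hj : ∀ y : Y,
      j (Quotient.mk (qSetoid (fun (n : ℤ) (y : Y) => sigmaPow σ n y)) y) =
        Quotient.mk (qSetoid (actZ σ)) ((⊤ : WithTop ℤ), y)) :
    Set.range (iotaO σ) ∪ Set.range j = Set.univ := by
  refine Set.eq_univ_of_forall fun s => ?_
  induction s using Quotient.inductionOn with
  | h p =>
    obtain ⟨m, y⟩ := p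
    induction m using WithTop.recTopCoe with
    | top => exact Or.inr ⟨_, hj y⟩
    | coe m => exact Or.inl ⟨y, (mk_coe_eq_iotaO σ m y).symm⟩

end QuasiOrbit

theorem open_sets_of_quasiOrbitSpace_general {Y : Type*} [TopologicalSpace Y]
    (σ : Y ≃ₜ Y)
    (j : Quotient (qSetoid (fun (n : ℤ) (y : Y) => sigmaPow σ n y)) →
      Quotient (qSetoid (actZ σ)))
    (hj : ∀ y : Y,
      j (Quotient.mk (qSetoid (fun (n : ℤ) (y : Y) => sigmaPow σ n y)) y) =
        Quotient.mk (qSetoid (actZ σ)) ((⊤ : WithTop ℤ), y)) :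
    ∀ S : Set (Quotient (qSetoid (actZ σ))), IsOpen S →
      ∃ (U : Set Y) (W : Set (Quotient (qSetoid (fun (n : ℤ) (y : Y) => sigmaPow σ n y)))),
        IsOpen U ∧ IsOpen W ∧ S = iotaO σ '' U ∪ j '' W ∧ (W.Nonempty → U.Nonempty) := by
  intro S hS
  have hj_cont : Continuous j := by
    refine isQuotientMap_quotient_mk'.continuous_iff.mpr ?_
    convert continuous_mk_prodMk σ ⊤ using 1
    exact funext hj
  refine ⟨iotaO σ ⁻¹' S, j ⁻¹' S, hS.preimage (continuous_iotaO σ), hS.preimage hj_cont,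
    ?_, ?_⟩
  · rw [Set.image_preimage_eq_inter_range, Set.image_preimage_eq_inter_range,
      ← Set.inter_union_distrib_left, range_iotaO_union σ j hj, Set.inter_univ]
  · rintro ⟨w, hw⟩
    induction w using Quotient.inductionOn with
    | h y =>
      rw [Set.mem_preimage, hj] at hw
      exact ⟨y, (iotaO_specializes_mk_top σ y).mem_open hS hw⟩

/-- For a T₀ space `Y`: every open subset `S` of `O(Z∞ × Y)` can be written as
`S = ι(U) ∪ ĵ(W)` with `U ⊆ Y` open, `W ⊆ O(Y)` open, and `U` nonempty whenever `W` is
nonempty. -/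
theorem open_sets_of_quasiOrbitSpace {Y : Type*} [TopologicalSpace Y] [T0Space Y]
    (σ : Y ≃ₜ Y)
    (j : Quotient (qSetoid (fun (n : ℤ) (y : Y) => sigmaPow σ n y)) →
      Quotient (qSetoid (actZ σ)))
    (hj : ∀ y : Y,
      j (Quotient.mk (qSetoid (fun (n : ℤ) (y : Y) => sigmaPow σ n y)) y) =
        Quotient.mk (qSetoid (actZ σ)) ((⊤ : WithTop ℤ), y)) :
    ∀ S : Set (Quotient (qSetoid (actZ σ))), IsOpen S →
      ∃ (U : Set Y) (W : Set (Quotient (qSetoid (fun (n : ℤ) (y : Y) => sigmaPow σ n y)))),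
        IsOpen U ∧ IsOpen W ∧ S = iotaO σ '' U ∪ j '' W ∧ (W.Nonempty → U.Nonempty) :=
  open_sets_of_quasiOrbitSpace_general σ j hj
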